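/- Let N be a free ℤ-module of finite rank n ≥ 2 with a symmetric bilinear form (−,−) whose ℝ-linear extension to N ⊗ ℝ is nondegenerate of signature (2, n−2), extended ℂ-bilinearly to N ⊗ ℂ, and let ‖·‖ be any norm on the finite-dimensional vector space N ⊗ ℂ. Suppose Ω ∈ N ⊗ ℂ is a vector whose real and imaginary parts span a positive definite two-plane in N ⊗ ℝ. Then there is a constant r > 0 (depending on Ω) such that |(u,v)| ≤ r·‖u‖·|(Ω,v)| for all u ∈ N ⊗ ℂ and all v ∈ N ⊗ ℝ with (v,v) ≥ 0. -/

import Mathlib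

/-!
If `v ≠ 0` with `(v,v) ≥ 0` were orthogonal to both `Re Ω` and `Im Ω`, a nontrivial combination
`w = a Re Ω + b Im Ω + c v` would have vanishing coordinates along the two positive basis
vectors (three vectors, two coordinates), so `(w,w) ≤ 0` with equality only for `w = 0`; but
`(w,w) = (a Re Ω + b Im Ω)² + c² (v,v) ≥ 0`, which forces `a = b = 0` and then `v = 0`.
Hence the seminorm `v ↦ |(Ω,v)|` vanishes on the closed cone `(v,v) ≥ 0` only at `0`, and
compactness of the unit sphere gives `|(Ω,v)| ≥ d ‖v‖` there; in the same way `nrm u ≥ c ‖u‖`.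
The bilinear form is bounded, `|(u,v)| ≤ K ‖u‖ ‖v‖`, and `r = (K + 1) / (c d)` works.
-/

open scoped BigOperators

noncomputable section

/- The free ℤ-module `N` of rank `n` is realised as `Fin n → ℤ`, with `N ⊗ ℝ = Fin n → ℝ`
and `N ⊗ ℂ = Fin n → ℂ`; the symmetric bilinear form is given by an integer matrix `M`,
extended ℝ- and ℂ-bilinearly. -/

/-- The ℝ-bilinear extension of the form given by the integer matrix `M`. -/
def bR {n : ℕ} (M : Matrix (Fin n) (Fin n) ℤ) (u v : Fin n → ℝ) : ℝ :=
  ∑ i, ∑ j, (M i j : ℝ) * u i * v j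

/-- The ℂ-bilinear extension of the form given by the integer matrix `M`. -/
def bC {n : ℕ} (M : Matrix (Fin n) (Fin n) ℤ) (u v : Fin n → ℂ) : ℂ :=
  ∑ i, ∑ j, (M i j : ℂ) * u i * v j

/-- The inclusion `N ⊗ ℝ → N ⊗ ℂ`. -/
def toC {n : ℕ} (v : Fin n → ℝ) : Fin n → ℂ := fun i => (v i : ℂ)

/-- The real part of a vector in `N ⊗ ℂ`, as a vector in `N ⊗ ℝ`. -/
def reOf {n : ℕ} (u : Fin n → ℂ) : Fin n → ℝ := fun i => (u i).re

/-- The imaginary part of a vector in `N ⊗ ℂ`, as a vector in `N ⊗ ℝ`. -/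
def imOf {n : ℕ} (u : Fin n → ℂ) : Fin n → ℝ := fun i => (u i).im

theorem Module.Basis.exists_ne_zero_repr_sum_eq_zero {ι κ V : Type*} [Fintype κ]
    [AddCommGroup V] [Module ℝ V] (e : Module.Basis ι ℝ V) (s : Finset ι) (f : κ → V)
    (hcard : s.card < Fintype.card κ) :
    ∃ g : κ → ℝ, g ≠ 0 ∧ ∀ i ∈ s, e.repr (∑ j, g j • f j) i = 0 := by
  let π : V →ₗ[ℝ] s → ℝ := LinearMap.pi fun i => e.coord i
  have hdep : ¬ LinearIndependent ℝ (π ∘ f) := fun h => by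
    have := h.fintype_card_le_finrank
    rw [Module.finrank_fintype_fun_eq_card, Fintype.card_coe] at this
    omega
  obtain ⟨g, hg, j, hj⟩ := Fintype.not_linearIndependent_iff.mp hdep
  refine ⟨g, fun h => hj (congrFun h j), fun i hi => ?_⟩
  simpa [π, map_sum] using congrFun hg ⟨i, hi⟩

namespace LinearMap.BilinForm

variable {ι V : Type*} [Fintype ι] [DecidableEq ι] [AddCommGroup V] [Module ℝ V]
  {B : LinearMap.BilinForm ℝ V} {e : Module.Basis ι ℝ V} {pos : ι → Prop} [DecidablePred pos]

theorem apply_eq_sum_of_basis_diag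
    (he : ∀ i j, B (e i) (e j) = if i = j then (if pos i then 1 else -1) else 0) (x y : V) :
    B x y = ∑ i, e.repr x i * e.repr y i * (if pos i then 1 else -1) := by
  calc B x y = B (∑ i, e.repr x i • e i) (∑ j, e.repr y j • e j) := by
        rw [e.sum_repr, e.sum_repr]
    _ = _ := by
        simp only [map_sum, map_smul, LinearMap.sum_apply, LinearMap.smul_apply, smul_eq_mul, he]
        simp [mul_ite, Finset.sum_ite_eq', mul_comm]

theorem isSymm_of_basis_diag
    (he : ∀ i j, B (e i) (e j) = if i = j then (if pos i then 1 else -1) else 0) : B.IsSymm :=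
  ⟨fun x y => by simp only [apply_eq_sum_of_basis_diag he, mul_comm (e.repr x _)]⟩

theorem eq_zero_of_repr_eq_zero_of_apply_self_nonneg
    (he : ∀ i j, B (e i) (e j) = if i = j then (if pos i then 1 else -1) else 0) {w : V}
    (hw : ∀ i, pos i → e.repr w i = 0) (hww : 0 ≤ B w w) : w = 0 := by
  have hterm : ∀ i, e.repr w i * e.repr w i * (if pos i then 1 else -1) = -e.repr w i ^ 2 := by
    intro i
    by_cases hi : pos i
    · simp [hw i hi]
    · simp [hi, sq]
  rw [apply_eq_sum_of_basis_diag he, Finset.sum_congr rfl fun i _ => hterm i,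
    Finset.sum_neg_distrib, neg_nonneg] at hww
  have hsq := (Finset.sum_eq_zero_iff_of_nonneg fun i _ => sq_nonneg (e.repr w i)).mp
    (le_antisymm hww (Finset.sum_nonneg fun i _ => sq_nonneg _))
  exact e.repr.map_eq_zero_iff.mp <| Finsupp.ext fun i =>
    (pow_eq_zero_iff two_ne_zero).mp (hsq i (Finset.mem_univ i))

theorem eq_zero_of_forall_apply_eq_zero_of_apply_self_nonneg
    (he : ∀ i j, B (e i) (e j) = if i = j then (if pos i then 1 else -1) else 0)
    {k : ℕ} (hcard : Fintype.card {i // pos i} ≤ k) (x : Fin k → V)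
    (hx : ∀ a : Fin k → ℝ, a ≠ 0 → 0 < B (∑ j, a j • x j) (∑ j, a j • x j))
    {v : V} (hxv : ∀ j, B (x j) v = 0) (hv : 0 ≤ B v v) : v = 0 := by
  obtain ⟨g, hg, hrepr⟩ := e.exists_ne_zero_repr_sum_eq_zero {i | pos i} (Fin.cons v x)
    (by rw [← Fintype.card_subtype]; simpa using Nat.lt_succ_of_le hcard)
  set p := ∑ j, g j.succ • x j
  have hw : ∑ j, g j • (Fin.cons v x : Fin (k + 1) → V) j = g 0 • v + p := by
    simp [Fin.sum_univ_succ, p]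
  rw [hw] at hrepr
  have hpv : B p v = 0 := by simp [p, map_sum, hxv]
  have hvp : B v p = 0 := (isSymm_of_basis_diag he).eq v p ▸ hpv
  have hp : 0 ≤ B p p := by
    by_cases ha : (fun j : Fin k => g j.succ) = 0
    · rw [show p = 0 from Finset.sum_eq_zero fun j _ => by simp [congrFun ha j]]
      simp
    · exact (hx _ ha).le
  have hexp : B (g 0 • v + p) (g 0 • v + p) = g 0 ^ 2 * B v v + B p p := by
    simp only [map_add, map_smul, LinearMap.add_apply, LinearMap.smul_apply, smul_eq_mul, hpv, hvp]
    ring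
  have hw0 : g 0 • v + p = 0 :=
    eq_zero_of_repr_eq_zero_of_apply_self_nonneg he (by simpa using hrepr)
      (by rw [hexp]; positivity)
  have hpp : B p p = 0 := by
    simp only [hw0, map_zero] at hexp
    nlinarith [mul_nonneg (sq_nonneg (g 0)) hv]
  have htail : ∀ j : Fin k, g j.succ = 0 := by
    by_contra h
    exact (hx _ fun h' => h (congrFun h')).ne' hpp
  have hg0 : g 0 ≠ 0 := fun h0 => hg (funext fun j => Fin.cases h0 htail j)
  simpa [p, htail, hg0] using hw0

end LinearMap.BilinForm

theorem Seminorm.exists_pos_mul_norm_le_on_cone {E : Type*} [NormedAddCommGroup E]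
    [NormedSpace ℝ E] [FiniteDimensional ℝ E] (p : Seminorm ℝ E) {C : Set E} (hC : IsClosed C)
    (hCsmul : ∀ t : ℝ, 0 < t → ∀ v ∈ C, t • v ∈ C) (hp : ∀ v ∈ C, p v = 0 → v = 0) :
    ∃ d > 0, ∀ v ∈ C, d * ‖v‖ ≤ p v := by
  have hcont : Continuous p := continuousOn_univ.mp (p.convexOn.continuousOn isOpen_univ)
  obtain ⟨d, hd, hdK⟩ := ((isCompact_sphere (0 : E) 1).inter_right hC).exists_forall_le'
    hcont.continuousOn (a := 0) fun v hv => (apply_nonneg p v).lt_of_ne' fun h0 => by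
      simpa [hp v hv.2 h0] using hv.1
  refine ⟨d, hd, fun v hv => ?_⟩
  rcases eq_or_ne v 0 with rfl | hv0
  · simp
  have hnv := norm_pos_iff.mpr hv0
  have := hdK (‖v‖⁻¹ • v) ⟨by simp [norm_smul, hnv.ne'], hCsmul _ (inv_pos.mpr hnv) v hv⟩
  rw [map_smul_eq_mul, norm_inv, norm_norm, le_inv_mul_iff₀ hnv] at this
  linarith

variable {n : ℕ}

def bRBilin (M : Matrix (Fin n) (Fin n) ℤ) : LinearMap.BilinForm ℝ (Fin n → ℝ) :=
  Matrix.toLinearMap₂' ℝ (M.map (↑))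

theorem bRBilin_apply (M : Matrix (Fin n) (Fin n) ℤ) (u v : Fin n → ℝ) :
    bRBilin M u v = bR M u v := by
  simp only [bRBilin, Matrix.toLinearMap₂'_apply, bR, Matrix.map_apply, smul_eq_mul]
  exact Finset.sum_congr rfl fun i _ => Finset.sum_congr rfl fun j _ => by ring

def bCBilin (M : Matrix (Fin n) (Fin n) ℤ) : (Fin n → ℂ) →ₗ[ℝ] (Fin n → ℝ) →ₗ[ℝ] ℂ :=
  LinearMap.mk₂ ℝ (fun u v => bC M u (toC v))
    (fun _ _ _ => by
      simp only [bC, Pi.add_apply, mul_add, add_mul, Finset.sum_add_distrib])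
    (fun _ _ _ => by
      simp only [bC, Pi.smul_apply, Complex.real_smul, Finset.mul_sum]
      exact Finset.sum_congr rfl fun _ _ => Finset.sum_congr rfl fun _ _ => by ring)
    (fun _ _ _ => by
      simp only [bC, toC, Pi.add_apply, Complex.ofReal_add, mul_add, Finset.sum_add_distrib])
    (fun _ _ _ => by
      simp only [bC, toC, Pi.smul_apply, smul_eq_mul, Complex.real_smul, Complex.ofReal_mul,
        Finset.mul_sum]
      exact Finset.sum_congr rfl fun _ _ => Finset.sum_congr rfl fun _ _ => by ring)

theorem bCBilin_apply (M : Matrix (Fin n) (Fin n) ℤ) (u : Fin n → ℂ) (v : Fin n → ℝ) :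
    bCBilin M u v = bC M u (toC v) := rfl

theorem re_bC_toC (M : Matrix (Fin n) (Fin n) ℤ) (u : Fin n → ℂ) (v : Fin n → ℝ) :
    (bC M u (toC v)).re = bR M (reOf u) v := by
  simp [bC, bR, toC, reOf, Complex.re_sum]

theorem im_bC_toC (M : Matrix (Fin n) (Fin n) ℤ) (u : Fin n → ℂ) (v : Fin n → ℝ) :
    (bC M u (toC v)).im = bR M (imOf u) v := by
  simp [bC, bR, toC, imOf, Complex.im_sum]

def posCone (M : Matrix (Fin n) (Fin n) ℤ) : Set (Fin n → ℝ) := {v | 0 ≤ bR M v v}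

theorem isClosed_posCone (M : Matrix (Fin n) (Fin n) ℤ) : IsClosed (posCone M) :=
  isClosed_le continuous_const (by unfold bR; fun_prop)

theorem smul_mem_posCone (M : Matrix (Fin n) (Fin n) ℤ) (t : ℝ) {v : Fin n → ℝ}
    (hv : v ∈ posCone M) : t • v ∈ posCone M := by
  have : bR M (t • v) (t • v) = t ^ 2 * bR M v v := by
    simp only [← bRBilin_apply, map_smul, LinearMap.smul_apply, smul_eq_mul]
    ring
  show 0 ≤ bR M (t • v) (t • v)
  rw [this]
  exact mul_nonneg (sq_nonneg t) hv

theorem card_subtype_val_lt_two_le (n : ℕ) : Fintype.card {i : Fin n // (i : ℕ) < 2} ≤ 2 :=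
  Fintype.card_le_of_injective (fun i : {i : Fin n // (i : ℕ) < 2} => (⟨i, i.2⟩ : Fin 2))
    fun _ _ h => by simpa [Fin.ext_iff, Subtype.ext_iff] using h

theorem bC_toC_ne_zero (M : Matrix (Fin n) (Fin n) ℤ) {e : Module.Basis (Fin n) ℝ (Fin n → ℝ)}
    (he : ∀ i j, bR M (e i) (e j) = if i = j then (if (i : ℕ) < 2 then 1 else -1) else 0)
    {Ω : Fin n → ℂ}
    (hΩ : ∀ a b : ℝ, ¬ (a = 0 ∧ b = 0) →
      0 < bR M (a • reOf Ω + b • imOf Ω) (a • reOf Ω + b • imOf Ω))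
    {v : Fin n → ℝ} (hv : v ∈ posCone M) (hv0 : v ≠ 0) : bC M Ω (toC v) ≠ 0 := by
  intro h
  refine hv0 <| (bRBilin M).eq_zero_of_forall_apply_eq_zero_of_apply_self_nonneg
    (pos := fun i : Fin n => (i : ℕ) < 2) (by simpa only [bRBilin_apply] using he)
    (card_subtype_val_lt_two_le n) ![reOf Ω, imOf Ω] (fun a ha => ?_)
    (Fin.forall_fin_two.mpr ⟨?_, ?_⟩) (by rwa [bRBilin_apply])
  · simpa only [Fin.sum_univ_two, Matrix.cons_val_zero, Matrix.cons_val_one, bRBilin_apply] using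
      hΩ (a 0) (a 1) fun ⟨h0, h1⟩ => ha (funext (Fin.forall_fin_two.mpr ⟨h0, h1⟩))
  · simpa [bRBilin_apply, ← re_bC_toC] using congrArg Complex.re h
  · simpa [bRBilin_apply, ← im_bC_toC] using congrArg Complex.im h

theorem bound_on_positive_cone {n : ℕ}
    (M : Matrix (Fin n) (Fin n) ℤ)
    -- the real extension of the form is nondegenerate of signature (2, n-2):
    (e : Module.Basis (Fin n) ℝ (Fin n → ℝ))
    (he : ∀ i j, bR M (e i) (e j) =
      if i = j then (if (i : ℕ) < 2 then 1 else -1) else 0)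
    -- an arbitrary norm on the finite-dimensional complex vector space `N ⊗ ℂ`:
    (nrm : Seminorm ℂ (Fin n → ℂ)) (hnrm : ∀ u : Fin n → ℂ, nrm u = 0 → u = 0)
    -- `Ω` spans a positive definite two-plane in `N ⊗ ℝ`:
    (Ω : Fin n → ℂ)
    (hΩ : ∀ a b : ℝ, ¬ (a = 0 ∧ b = 0) →
      0 < bR M (a • reOf Ω + b • imOf Ω) (a • reOf Ω + b • imOf Ω)) :
    ∃ r : ℝ, 0 < r ∧ ∀ (u : Fin n → ℂ) (v : Fin n → ℝ), 0 ≤ bR M v v →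
      ‖bC M u (toC v)‖ ≤ r * nrm u * ‖bC M Ω (toC v)‖ := by
  obtain ⟨c, hc, hnrm_ge⟩ := (nrm.restrictScalars ℝ).exists_pos_mul_norm_le_on_cone
    isClosed_univ (fun _ _ _ _ => trivial) fun u _ => hnrm u
  obtain ⟨d, hd, hΩ_ge⟩ :=
    ((normSeminorm ℝ ℂ).comp (bCBilin M Ω)).exists_pos_mul_norm_le_on_cone
      (isClosed_posCone M) (fun t _ _ => smul_mem_posCone M t) fun v hv h0 =>
        by_contra fun hv0 => bC_toC_ne_zero M he hΩ hv hv0 (by simpa [bCBilin_apply] using h0)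
  set K := ‖(bCBilin M).toContinuousBilinearMap‖
  refine ⟨(K + 1) / (c * d), by positivity, fun u v hv => ?_⟩
  have hcu : c * ‖u‖ ≤ nrm u := hnrm_ge u trivial
  have hdv : d * ‖v‖ ≤ ‖bC M Ω (toC v)‖ := hΩ_ge v hv
  calc ‖bC M u (toC v)‖ ≤ K * ‖u‖ * ‖v‖ := (bCBilin M).toContinuousBilinearMap.le_opNorm₂ u v
    _ ≤ (K + 1) * ‖u‖ * ‖v‖ := by gcongr; linarith
    _ = (K + 1) / (c * d) * (c * ‖u‖) * (d * ‖v‖) := by field_simp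
    _ ≤ (K + 1) / (c * d) * nrm u * ‖bC M Ω (toC v)‖ := by gcongr

end
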